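/- arXiv:1508.03579 — 2 statements merged into one kernel-verified Lean document; each statement's English description precedes it below -/
import Mathlib

section
/- In the unsmoothed dynamic spooling graph with source node 1, flooding requires exactly n-1 rounds to complete: after r rounds, the set of informed nodes is exactly {1, ..., r+1}. -/
/-- The `i`-spool graph on vertices labelled `1,…,n` (vertex `a : Fin n` has label
`a.val + 1`): a star on `{1,…,i}` centered at `i`, a star on `{i+1,…,n}` centered at
`i+1`, and the edge `{i, i+1}`. -/
def spool (n i : ℕ) : SimpleGraph (Fin n) :=
  SimpleGraph.fromRel (fun a b =>
    (a.val + 1 < i ∧ b.val + 1 = i) ∨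
    (b.val + 1 = i + 1 ∧ i + 1 < a.val + 1) ∨
    (a.val + 1 = i ∧ b.val + 1 = i + 1))

open Classical in
/-- Flooding on the dynamic spooling graph: node `1` (index `0`) starts informed; in
round `r + 1` the graph is the `min (r+1) (n-1)`-spool graph, and every neighbor of an
informed node becomes informed. -/
noncomputable def informed (n : ℕ) : ℕ → Finset (Fin n)
  | 0 => Finset.univ.filter (fun a => a.val = 0)
  | r + 1 => informed n r ∪
      Finset.univ.filter (fun b => ∃ a ∈ informed n r, (spool n (min (r + 1) (n - 1))).Adj a b)

/-- In the unsmoothed dynamic spooling graph with source node `1`, after `r` rounds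
the set of informed nodes is exactly `{1, …, r+1}` (indices `{0, …, r}`); hence
flooding completes in exactly `n - 1` rounds. -/
theorem stmt17 (n : ℕ) (hn : 2 ≤ n) (r : ℕ) (hr : r ≤ n - 1) :
    informed n r = Finset.univ.filter (fun a : Fin n => a.val ≤ r) := by
  induction r with
  | zero =>
    ext a
    simp [informed, Nat.le_zero]
  | succ r IH =>
    have hr' : r ≤ n - 1 := Nat.le_of_succ_le hr
    have hmin : min (r + 1) (n - 1) = r + 1 := min_eq_left hr
    rw [informed, IH hr', hmin]
    ext b
    simp only [Finset.mem_union, Finset.mem_filter, Finset.mem_univ, true_and,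
      spool, SimpleGraph.fromRel_adj, ne_eq]
    constructor
    · rintro (h | ⟨a, ha, hne, h⟩)
      · omega
      · omega
    · intro hb
      rcases Nat.lt_or_ge b.val (r + 1) with h | h
      · left; omega
      · have hbv : b.val = r + 1 := by omega
        right
        refine ⟨⟨r, by omega⟩, le_refl r, ?_, ?_⟩
        · intro hab
          have := congrArg Fin.val hab
          simp at this
          omega
        · left
          right; right
          simp [hbv]
end

section
/- In the lollipop graph on n = 2m vertices, the expected hitting time of a simple random walk from a clique vertex u to the path endpoint v = π(m) is at least Ω(n^3), i.e., there is a constant c > 0 such that for all sufficiently large n this expected hitting time is at least c·n^3. -/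
def lollipop (m : ℕ) : SimpleGraph (Fin (2 * m)) :=
  SimpleGraph.fromRel (fun a b =>
    (a.val < m ∧ b.val < m) ∨ (b.val = a.val + 1 ∧ m ≤ a.val + 1))

lemma lollipop_adj {m : ℕ} (a b : Fin (2*m)) :
    (lollipop m).Adj a b ↔ ¬ a.val = b.val ∧
      ((a.val < m ∧ b.val < m) ∨ (b.val = a.val + 1 ∧ m ≤ a.val + 1)
        ∨ (a.val = b.val + 1 ∧ m ≤ b.val + 1)) := by
  simp only [lollipop, SimpleGraph.fromRel_adj, ne_eq, Fin.ext_iff]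
  tauto

lemma card_filter_lt (N k : ℕ) (h : k ≤ N) :
    (Finset.univ.filter (fun x : Fin N => x.val < k)).card = k := by
  have e : (Finset.univ.filter (fun x : Fin N => x.val < k))
      = Finset.map (Fin.castLEEmb h) Finset.univ := by
    ext x
    simp only [Finset.mem_filter, Finset.mem_univ, true_and, Finset.mem_map,
      Fin.castLEEmb_apply]
    constructor
    · intro hx; exact ⟨⟨x, hx⟩, Fin.ext rfl⟩
    · rintro ⟨y, _, rfl⟩; exact y.isLt
  rw [e]; simp

lemma nb_clique {m : ℕ} (w : Fin (2*m)) (hw : w.val + 1 < m)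
    (s : Finset (Fin (2*m))) (hs : ∀ x, x ∈ s ↔ (lollipop m).Adj w x) :
    s = (Finset.univ.filter (fun x : Fin (2*m) => x.val < m)).erase w := by
  ext x
  rw [hs]
  simp only [lollipop_adj, Finset.mem_erase, Finset.mem_filter, Finset.mem_univ,
    true_and, ne_eq, Fin.ext_iff]
  omega

lemma nb_bridge {m : ℕ} (hm : 2 ≤ m) (w wm : Fin (2*m)) (hw : w.val = m - 1)
    (hwm : wm.val = m)
    (s : Finset (Fin (2*m))) (hs : ∀ x, x ∈ s ↔ (lollipop m).Adj w x) :
    s = insert wm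
      ((Finset.univ.filter (fun x : Fin (2*m) => x.val < m)).erase w) := by
  ext x
  rw [hs]
  simp only [lollipop_adj, Finset.mem_insert, Finset.mem_erase, Finset.mem_filter,
    Finset.mem_univ, true_and, ne_eq, Fin.ext_iff, hwm]
  omega

lemma nb_path {m : ℕ} (w a b : Fin (2*m)) (hw1 : m ≤ w.val)
    (ha : a.val = w.val + 1) (hb : b.val + 1 = w.val)
    (s : Finset (Fin (2*m))) (hs : ∀ x, x ∈ s ↔ (lollipop m).Adj w x) :
    s = {a, b} := by
  ext x
  rw [hs]
  simp only [lollipop_adj, Finset.mem_insert, Finset.mem_singleton, ne_eq, Fin.ext_iff]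
  omega

def gval (m : ℕ) (h : Fin (2*m) → ℝ) (k : ℕ) : ℝ :=
  if hk : m - 1 + k < 2*m then h ⟨m-1+k, hk⟩ else 0

lemma gval_eq (m : ℕ) (h : Fin (2*m) → ℝ) (k : ℕ) (hk : m - 1 + k < 2*m) :
    gval m h k = h ⟨m-1+k, hk⟩ := dif_pos hk

open Classical in
/-- Lower-bound half of the `O(n³)` maximum hitting time for static connected graphs:
in the lollipop graph on `n = 2m` vertices, the expected hitting time of a simple
random walk from a clique vertex `u` to the path endpoint `v = π(m)` (index `2m-1`)
is at least `c·n³` for a universal constant `c > 0` and all sufficiently large `n`.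
The expected hitting times are characterized as the unique solution `h` of `h(v) = 0`
and `h(w) = 1 + (∑_{x ∼ w} h(x))/deg(w)` for `w ≠ v`. -/
theorem stmt19 : ∃ c : ℝ, 0 < c ∧ ∃ N : ℕ, ∀ m : ℕ, N ≤ m →
    ∀ (v : Fin (2 * m)), v.val = 2 * m - 1 →
    ∀ (u : Fin (2 * m)), u.val < m →
    ∀ h : Fin (2 * m) → ℝ,
      h v = 0 →
      (∀ w : Fin (2 * m), w ≠ v →
        h w = 1 + (∑ x ∈ Finset.univ.filter (fun x => (lollipop m).Adj w x), h x) /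
          ((Finset.univ.filter (fun x => (lollipop m).Adj w x)).card : ℝ)) →
      c * ((2 * m : ℕ) : ℝ) ^ 3 ≤ h u := by
  classical
  refine ⟨1/8, by norm_num, 2, ?_⟩
  intro m hm v hv u hu h hv0 heq
  have hmR : (2:ℝ) ≤ (m:ℝ) := by exact_mod_cast hm
  obtain ⟨C, hC⟩ : ∃ C : Finset (Fin (2*m)),
      C = Finset.univ.filter (fun x : Fin (2*m) => x.val < m) := ⟨_, rfl⟩
  obtain ⟨S, hSdef⟩ : ∃ S : ℝ, S = ∑ x ∈ C, h x := ⟨_, rfl⟩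
  have hcardC : C.card = m := by rw [hC]; exact card_filter_lt (2*m) m (by omega)
  have hcastm1 : ((m - 1 : ℕ) : ℝ) = (m:ℝ) - 1 := by
    rw [Nat.cast_sub (by omega), Nat.cast_one]
  -- clique (non-bridge) equation
  have hclq : ∀ w : Fin (2*m), w.val + 1 < m → h w * m = (m:ℝ) - 1 + S := by
    intro w hw
    have hne : w ≠ v := by
      intro e; rw [e] at hw; omega
    have hw0 := heq w hne
    rw [nb_clique w hw (Finset.univ.filter (fun x => (lollipop m).Adj w x))
      (fun x => by simp), ← hC] at hw0
    have hwC : w ∈ C := by rw [hC]; simp; omega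
    rw [Finset.sum_erase_eq_sub hwC, Finset.card_erase_of_mem hwC] at hw0
    simp only [hcardC] at hw0
    rw [hcastm1, ← hSdef] at hw0
    have hne1 : (m:ℝ) - 1 ≠ 0 := by linarith
    have h2 : h w - 1 = (S - h w)/((m:ℝ)-1) := by linarith
    have h3 : (h w - 1) * ((m:ℝ)-1) = S - h w := by
      rw [h2]; field_simp
    linear_combination h3
  -- the bridge vertex
  have hb1 : m - 1 < 2*m := by omega
  obtain ⟨wb, hwbval⟩ : ∃ wb : Fin (2*m), wb.val = m - 1 := ⟨⟨m-1, hb1⟩, rfl⟩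
  have hwbC : wb ∈ C := by rw [hC]; simp; omega
  -- the sum over the clique
  have hS : S = ((m:ℝ)-1)^2 + m * h wb := by
    have hconst : ∀ x ∈ C.erase wb, h x * (m:ℝ) = (m:ℝ)-1+S := by
      intro x hx
      refine hclq x ?_
      rw [Finset.mem_erase, hC] at hx
      obtain ⟨hx1, hx2⟩ := hx
      simp only [Finset.mem_filter, Finset.mem_univ, true_and] at hx2
      have : x.val ≠ wb.val := fun e => hx1 (Fin.ext e)
      omega
    have hsum : ∑ x ∈ C.erase wb, h x * (m:ℝ) = ((m:ℝ)-1) * ((m:ℝ)-1+S) := by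
      rw [Finset.sum_congr rfl hconst, Finset.sum_const,
        Finset.card_erase_of_mem hwbC]
      simp only [hcardC]
      rw [nsmul_eq_mul, hcastm1]
    have h1 : (S - h wb) * (m:ℝ) = ((m:ℝ)-1)*((m:ℝ)-1+S) := by
      rw [← hsum, ← Finset.sum_mul, Finset.sum_erase_eq_sub hwbC, ← hSdef]
    linear_combination h1
  -- the bridge equation
  have hm2 : m < 2*m := by omega
  obtain ⟨wm, hwmval⟩ : ∃ wm : Fin (2*m), wm.val = m := ⟨⟨m, hm2⟩, rfl⟩
  have hp : h wm = h wb - ((m:ℝ)^2 - m + 1) := by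
    have hne : wb ≠ v := by
      intro e
      have := congrArg Fin.val e
      rw [hwbval, hv] at this; omega
    have hb0 := heq wb hne
    rw [nb_bridge hm wb wm hwbval hwmval
      (Finset.univ.filter (fun x => (lollipop m).Adj wb x))
      (fun x => by simp), ← hC] at hb0
    have hnm : wm ∉ C.erase wb := by
      rw [hC]
      simp only [Finset.mem_erase, Finset.mem_filter, Finset.mem_univ, true_and,
        not_and, hwmval]
      omega
    rw [Finset.sum_insert hnm, Finset.card_insert_of_notMem hnm,
      Finset.card_erase_of_mem hwbC] at hb0
    simp only [hcardC] at hb0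
    rw [Finset.sum_erase_eq_sub hwbC, ← hSdef] at hb0
    have hcast2 : ((m - 1 + 1 : ℕ) : ℝ) = (m:ℝ) := by
      have e : m - 1 + 1 = m := by omega
      rw [e]
    rw [hcast2] at hb0
    have h2 : h wb - 1 = (h wm + (S - h wb))/(m:ℝ) := by linarith
    have h3 : (h wb - 1) * (m:ℝ) = h wm + (S - h wb) := by
      rw [h2]; field_simp
    linear_combination (-1) * h3 - hS
  -- values along the path
  have hg : ∀ (k : ℕ) (hk : m - 1 + k < 2*m), gval m h k = h ⟨m-1+k, hk⟩ :=
    fun k hk => gval_eq m h k hk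
  have hlt0 : m - 1 + 0 < 2*m := by omega
  have hg0 : gval m h 0 = h wb := by
    rw [hg 0 hlt0]
    congr 1
    apply Fin.ext
    simp only [Fin.val_mk, hwbval]
    omega
  have hlt1 : m - 1 + 1 < 2*m := by omega
  have hg1 : gval m h 1 = h wm := by
    rw [hg 1 hlt1]
    congr 1
    apply Fin.ext
    simp only [Fin.val_mk, hwmval]
    omega
  have hstep : ∀ k, 1 ≤ k → k + 1 ≤ m →
      gval m h (k+1) = 2 * gval m h k - gval m h (k-1) - 2 := by
    intro k hk1 hk2
    have hwlt : m - 1 + k < 2*m := by omega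
    have hplt : m - 1 + (k+1) < 2*m := by omega
    have hmlt : m - 1 + (k-1) < 2*m := by omega
    have hne : (⟨m-1+k, hwlt⟩ : Fin (2*m)) ≠ v := by
      intro e
      have := congrArg Fin.val e
      simp only [Fin.val_mk, hv] at this; omega
    have h0 := heq ⟨m-1+k, hwlt⟩ hne
    have ha : (⟨m-1+(k+1), hplt⟩ : Fin (2*m)).val
        = (⟨m-1+k, hwlt⟩ : Fin (2*m)).val + 1 := by
      simp only [Fin.val_mk]; omega
    have hbv : (⟨m-1+(k-1), hmlt⟩ : Fin (2*m)).val + 1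
        = (⟨m-1+k, hwlt⟩ : Fin (2*m)).val := by
      simp only [Fin.val_mk]; omega
    have hwge : m ≤ (⟨m-1+k, hwlt⟩ : Fin (2*m)).val := by
      simp only [Fin.val_mk]; omega
    rw [nb_path ⟨m-1+k, hwlt⟩ ⟨m-1+(k+1), hplt⟩ ⟨m-1+(k-1), hmlt⟩ hwge ha hbv
      (Finset.univ.filter (fun x => (lollipop m).Adj ⟨m-1+k, hwlt⟩ x))
      (fun x => by simp)] at h0
    have hab : (⟨m-1+(k+1), hplt⟩ : Fin (2*m)) ≠ ⟨m-1+(k-1), hmlt⟩ := by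
      simp only [ne_eq, Fin.ext_iff, Fin.val_mk]; omega
    rw [Finset.sum_pair hab, Finset.card_pair hab] at h0
    rw [hg (k+1) hplt, hg k hwlt, hg (k-1) hmlt]
    push_cast at h0
    linarith
  -- closed form along the path
  have hform : ∀ k : ℕ,
      (k ≤ m → gval m h k = gval m h 0 - (k:ℝ)*((m:ℝ)^2 - m + 1) - (k:ℝ)*((k:ℝ)-1)) ∧
      ((k+1) ≤ m → gval m h (k+1) =
        gval m h 0 - ((k:ℝ)+1)*((m:ℝ)^2 - m + 1) - ((k:ℝ)+1)*(k:ℝ)) := by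
    intro k
    induction k with
    | zero =>
      constructor
      · intro _; push_cast; ring
      · intro _
        rw [hg1, hp, hg0]; push_cast; ring
    | succ k ih =>
      constructor
      · intro hk
        have := ih.2 hk
        rw [this]; push_cast; ring
      · intro hk2
        have hrec := hstep (k+1) (by omega) (by omega)
        have ih1 := ih.2 (by omega)
        have ih0 := ih.1 (by omega)
        simp only [Nat.add_sub_cancel] at hrec
        rw [hrec, ih1, ih0]
        push_cast; ring
  have hB : h wb = (m:ℝ)^3 := by
    have hltm : m - 1 + m < 2*m := by omega
    have hgm : gval m h m = 0 := by
      rw [hg m hltm]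
      have e : (⟨m-1+m, hltm⟩ : Fin (2*m)) = v := by
        apply Fin.ext
        simp only [Fin.val_mk, hv]; omega
      rw [e, hv0]
    have hf := (hform m).1 (le_refl m)
    rw [hgm, hg0] at hf
    linear_combination (-1) * hf
  -- finish
  have hcastn : ((2 * m : ℕ) : ℝ) = 2 * (m:ℝ) := by push_cast; ring
  rw [hcastn]
  have hgoal : (1/8 : ℝ) * (2*(m:ℝ))^3 = (m:ℝ)^3 := by ring
  rw [hgoal]
  rcases Nat.lt_or_ge (u.val + 1) m with hcase | hcase
  · have hue := hclq u hcase
    rw [hS, hB] at hue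
    nlinarith [hue, hmR, sq_nonneg ((m:ℝ)-1)]
  · have huwb : u = wb := by
      apply Fin.ext
      rw [hwbval]; omega
    rw [huwb, hB]
end
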